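/- For every integer τ ≥ 1, the sum of squared coefficients satisfies Σ_{i=1}^{τ} (α_τ^i)² ≤ 2H/τ. -/

import Mathlib

open Finset

/-- The learning rate `α_τ = (H+1)/(H+τ)`. -/
noncomputable def lr (H : ℝ) (τ : ℕ) : ℝ := (H + 1) / (H + τ)

/-- The coefficients `α_τ^i`. -/
noncomputable def acoef (H : ℝ) (τ i : ℕ) : ℝ :=
  if i = 0 then ∏ j ∈ Finset.Icc 1 τ, (1 - lr H j)
  else lr H i * ∏ j ∈ Finset.Icc (i + 1) τ, (1 - lr H j)

/- For any step sizes `a j`, the coefficients `a i ∏_{j>i} (1 - a j)` telescope to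
`1 - ∏ (1 - a j)`; since `α_1 = 1`, the `α_τ^i` with `i ≥ 1` sum to exactly `1`. Each of them is
at most `α_τ`, because `α_τ (1 - α_{τ+1}) ≤ α_{τ+1}`. Hence `∑ (α_τ^i)² ≤ α_τ ∑ α_τ^i = α_τ`,
and `(H+1)/(H+τ) ≤ 2H/τ` for `H ≥ 1`. -/

theorem Finset.sum_mul_prod_Icc_one_sub {R : Type*} [CommRing R] (a : ℕ → R) (τ : ℕ) :
    ∑ i ∈ Icc 1 τ, a i * ∏ j ∈ Icc (i + 1) τ, (1 - a j) = 1 - ∏ j ∈ Icc 1 τ, (1 - a j) := by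
  induction τ with
  | zero => simp
  | succ τ ih =>
    have hprod : ∀ i ∈ Icc 1 τ, a i * ∏ j ∈ Icc (i + 1) (τ + 1), (1 - a j)
        = a i * (∏ j ∈ Icc (i + 1) τ, (1 - a j)) * (1 - a (τ + 1)) := by
      intro i hi
      rw [prod_Icc_succ_top (Nat.succ_le_succ (mem_Icc.1 hi).2), mul_assoc]
    rw [sum_Icc_succ_top (Nat.le_add_left 1 τ), sum_congr rfl hprod, ← sum_mul, ih,
      prod_Icc_succ_top (Nat.le_add_left 1 τ), Icc_eq_empty_of_lt (Nat.lt_succ_self _),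
      prod_empty]
    ring

theorem Finset.sum_sq_le_mul_sum_of_le {ι R : Type*} [CommSemiring R] [PartialOrder R]
    [IsOrderedRing R] {s : Finset ι} {f : ι → R} {c : R} (hf : ∀ i ∈ s, 0 ≤ f i)
    (hc : ∀ i ∈ s, f i ≤ c) : ∑ i ∈ s, f i ^ 2 ≤ c * ∑ i ∈ s, f i := by
  rw [mul_sum]
  exact sum_le_sum fun i hi => by
    rw [sq]; exact mul_le_mul_of_nonneg_right (hc i hi) (hf i hi)

section LearningRate

variable {H : ℝ}

theorem lr_one (hH : 0 ≤ H) : lr H 1 = 1 := by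
  rw [lr, Nat.cast_one, div_self (by linarith)]

theorem lr_nonneg (hH : 0 ≤ H) (j : ℕ) : 0 ≤ lr H j := by
  unfold lr; positivity

theorem one_sub_lr_eq (hH : 0 ≤ H) (τ : ℕ) : 1 - lr H (τ + 1) = τ / (H + (τ + 1)) := by
  rw [lr, Nat.cast_succ]
  field_simp
  ring

theorem one_sub_lr_nonneg (hH : 0 ≤ H) {j : ℕ} (hj : 1 ≤ j) : 0 ≤ 1 - lr H j := by
  obtain ⟨τ, rfl⟩ := Nat.exists_eq_add_of_le' hj
  rw [one_sub_lr_eq hH]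
  positivity

theorem lr_mul_one_sub_lr_succ_le (hH : 0 ≤ H) {τ : ℕ} (hτ : 1 ≤ τ) :
    lr H τ * (1 - lr H (τ + 1)) ≤ lr H (τ + 1) := by
  rw [one_sub_lr_eq hH, lr, lr, Nat.cast_succ, div_mul_div_comm,
    div_le_div_iff₀ (by positivity) (by positivity)]
  have : 0 ≤ (H + 1) * (H + (τ + 1)) * H := by positivity
  nlinarith

theorem lr_le_two_mul_div (hH : 1 ≤ H) {τ : ℕ} (hτ : 1 ≤ τ) : lr H τ ≤ 2 * H / τ := by
  have hτ' : (1 : ℝ) ≤ τ := by exact_mod_cast hτ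
  rw [lr, div_le_div_iff₀ (by positivity) (by positivity)]
  nlinarith

theorem acoef_of_ne_zero {i : ℕ} (τ : ℕ) (hi : i ≠ 0) :
    acoef H τ i = lr H i * ∏ j ∈ Icc (i + 1) τ, (1 - lr H j) :=
  if_neg hi

theorem acoef_self {i : ℕ} (hi : i ≠ 0) : acoef H i i = lr H i := by
  rw [acoef_of_ne_zero i hi, Icc_eq_empty (by omega), prod_empty, mul_one]

theorem acoef_succ {i τ : ℕ} (hiτ : i ≤ τ) :
    acoef H (τ + 1) i = acoef H τ i * (1 - lr H (τ + 1)) := by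
  unfold acoef
  split_ifs
  · exact prod_Icc_succ_top (by omega) _
  · rw [prod_Icc_succ_top (by omega), mul_assoc]

theorem acoef_nonneg (hH : 0 ≤ H) (τ i : ℕ) : 0 ≤ acoef H τ i := by
  have hprod : ∀ k, 1 ≤ k → 0 ≤ ∏ j ∈ Icc k τ, (1 - lr H j) := fun k hk =>
    prod_nonneg fun j hj => one_sub_lr_nonneg hH (hk.trans (mem_Icc.1 hj).1)
  unfold acoef
  split_ifs
  · exact hprod 1 le_rfl
  · exact mul_nonneg (lr_nonneg hH i) (hprod (i + 1) (by omega))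

theorem acoef_le_lr (hH : 0 ≤ H) {i τ : ℕ} (hi : i ≠ 0) (hiτ : i ≤ τ) :
    acoef H τ i ≤ lr H τ := by
  induction τ, hiτ using Nat.le_induction with
  | base => exact (acoef_self hi).le
  | succ τ hiτ ih =>
    rw [acoef_succ hiτ]
    calc acoef H τ i * (1 - lr H (τ + 1))
        ≤ lr H τ * (1 - lr H (τ + 1)) :=
          mul_le_mul_of_nonneg_right ih (one_sub_lr_nonneg hH (by omega))
      _ ≤ lr H (τ + 1) := lr_mul_one_sub_lr_succ_le hH (by omega)

theorem sum_acoef_eq_one (hH : 0 ≤ H) {τ : ℕ} (hτ : 1 ≤ τ) :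
    ∑ i ∈ Icc 1 τ, acoef H τ i = 1 := by
  have hfirst : ∏ j ∈ Icc 1 τ, (1 - lr H j) = 0 :=
    prod_eq_zero (mem_Icc.2 ⟨le_rfl, hτ⟩) (by rw [lr_one hH, sub_self])
  rw [sum_congr rfl fun i hi => acoef_of_ne_zero τ (Nat.one_le_iff_ne_zero.1 (mem_Icc.1 hi).1),
    sum_mul_prod_Icc_one_sub, hfirst, sub_zero]

end LearningRate

theorem stmt_2 (H : ℝ) (hH : 1 ≤ H) (τ : ℕ) (hτ : 1 ≤ τ) :
    ∑ i ∈ Finset.Icc 1 τ, (acoef H τ i) ^ 2 ≤ 2 * H / τ := by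
  have hH0 : 0 ≤ H := by linarith
  calc ∑ i ∈ Icc 1 τ, acoef H τ i ^ 2
      ≤ lr H τ * ∑ i ∈ Icc 1 τ, acoef H τ i :=
        sum_sq_le_mul_sum_of_le (fun i _ => acoef_nonneg hH0 τ i)
          fun i hi => acoef_le_lr hH0 (Nat.one_le_iff_ne_zero.1 (mem_Icc.1 hi).1) (mem_Icc.1 hi).2
    _ = lr H τ := by rw [sum_acoef_eq_one hH0 hτ, mul_one]
    _ ≤ 2 * H / τ := lr_le_two_mul_div hH hτ
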